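/- arXiv:2101.01446 — 5 statements merged into one kernel-verified Lean document; each statement's English description precedes it below -/
import Mathlib

section
/- If A is a commutative algebra of finite type over a noetherian subring B contained in A^G, where G is a finite group acting on A by B-algebra automorphisms, then A^G is a B-algebra of finite type; in particular A^G is noetherian and A is a finite A^G-module. -/
/-- The subring `A^G` of `G`-invariant elements of `A`. -/
def fixedSubring (G A : Type*) [Group G] [CommRing A] [MulSemiringAction G A] : Subring A where
  carrier := {a | ∀ g : G, g • a = a}
  zero_mem' := by intro g; simp
  one_mem' := by intro g; simp
  add_mem' := by intro a b ha hb g; rw [smul_add, ha g, hb g]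
  mul_mem' := by intro a b ha hb g; rw [smul_mul', ha g, hb g]
  neg_mem' := by intro a ha g; rw [smul_neg, ha g]

/-! Each `a : A` is a root of the monic polynomial `∏ g, (X - g • a)`, whose coefficients are
`G`-invariant, so `A` is integral over `A^G`; being of finite type over `B ⊆ A^G`, it is then
finite over `A^G`, and the Artin–Tate lemma makes `A^G` of finite type over the noetherian `B`. -/

instance fixedSubring.isInvariant (G A : Type*) [Group G] [CommRing A] [MulSemiringAction G A] :
    Algebra.IsInvariant (fixedSubring G A) A G :=
  ⟨fun a ha => ⟨⟨a, ha⟩, rfl⟩⟩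

/-- The Artin–Tate lemma, with `T` module-finite over `S` because it is integral and of finite
type. -/
theorem Algebra.FiniteType.of_isIntegral_of_injective (R S T : Type*) [CommRing R] [CommRing S]
    [CommRing T] [Algebra R S] [Algebra S T] [Algebra R T] [IsScalarTower R S T]
    [IsNoetherianRing R] [Algebra.FiniteType R T] [Algebra.IsIntegral S T]
    (hinj : Function.Injective (algebraMap S T)) : Algebra.FiniteType R S :=
  have : Algebra.FiniteType S T := .of_restrictScalars_finiteType R S T
  ⟨fg_of_fg_of_fg R S T Algebra.FiniteType.out (Algebra.IsIntegral.finite).fg_top hinj⟩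

/-- If `A` is a commutative algebra of finite type over a noetherian subring
`B ⊆ A^G`, where the finite group `G` acts on `A` by `B`-algebra automorphisms, then `A^G` is a
`B`-algebra of finite type; in particular `A^G` is noetherian and `A` is a finite
`A^G`-module. -/
theorem fixedSubring_finiteType (G A : Type*) [Group G] [Finite G] [CommRing A]
    [MulSemiringAction G A] (B : Subring A) (hB : B ≤ fixedSubring G A)
    (hnoeth : IsNoetherianRing B) (hft : RingHom.FiniteType B.subtype) :
    RingHom.FiniteType (Subring.inclusion hB) ∧
      IsNoetherianRing (fixedSubring G A) ∧
      RingHom.Finite (fixedSubring G A).subtype := by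
  let : Algebra B (fixedSubring G A) := (Subring.inclusion hB).toAlgebra
  have : IsScalarTower B (fixedSubring G A) A := .of_algebraMap_eq fun _ => rfl
  have : Algebra.FiniteType B A := hft
  have : Algebra.IsIntegral (fixedSubring G A) A := Algebra.IsInvariant.isIntegral _ A G
  have : Algebra.FiniteType (fixedSubring G A) A := .of_restrictScalars_finiteType B _ A
  have hfin : Module.Finite (fixedSubring G A) A := Algebra.IsIntegral.finite
  have : Algebra.FiniteType B (fixedSubring G A) :=
    .of_isIntegral_of_injective B _ A Subtype.val_injective
  exact ⟨this, Algebra.FiniteType.isNoetherianRing B _, hfin⟩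
end

section
/- If A is a finitely generated commutative ring (i.e., a finitely generated ℤ-algebra) with an action of a finite group G, then A^G is a finitely generated ring, A^G is noetherian, and A is a finite A^G-module. -/
/-!
Every `a ∈ A` is a root of the monic polynomial `∏_{g ∈ G} (X - g • a)`, whose coefficients are
`G`-invariant, so `A` is integral over `A^G`; being also of finite type over it, `A` is a finite
`A^G`-module. The Artin–Tate lemma for `ℤ ⊆ A^G ⊆ A` then makes `A^G` a finitely generated
`ℤ`-algebra, hence noetherian by the Hilbert basis theorem.
-/

theorem Algebra.FiniteType.of_finite_of_injective (R S B : Type*) [CommRing R] [CommRing S]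
    [CommRing B] [Algebra R S] [Algebra S B] [Algebra R B] [IsScalarTower R S B]
    [IsNoetherianRing R] [Algebra.FiniteType R B] [Module.Finite S B]
    (hinj : Function.Injective (algebraMap S B)) : Algebra.FiniteType R S :=
  ⟨fg_of_fg_of_fg R S B Algebra.FiniteType.out Module.Finite.fg_top hinj⟩

/-- If `A` is a finitely generated commutative ring (i.e. a finitely generated
`ℤ`-algebra) with an action of a finite group `G`, then `A^G` is a finitely generated ring,
`A^G` is noetherian, and `A` is a finite `A^G`-module. -/
theorem fixedSubring_finiteType_of_finiteType (G A : Type*) [Group G] [Finite G] [CommRing A]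
    [MulSemiringAction G A] (hA : Algebra.FiniteType ℤ A) :
    Algebra.FiniteType ℤ (fixedSubring G A) ∧
      IsNoetherianRing (fixedSubring G A) ∧
      RingHom.Finite (fixedSubring G A).subtype := by
  have : Algebra.FiniteType (fixedSubring G A) A := .of_restrictScalars_finiteType ℤ _ A
  have : Algebra.IsIntegral (fixedSubring G A) A := Algebra.IsInvariant.isIntegral _ _ G
  have hfinite : Module.Finite (fixedSubring G A) A := Algebra.IsIntegral.finite
  have : Algebra.FiniteType ℤ (fixedSubring G A) :=
    .of_finite_of_injective ℤ _ A Subtype.val_injective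
  exact ⟨this, Algebra.FiniteType.isNoetherianRing ℤ _, hfinite⟩
end

section
/- Let G be a finite group acting on a commutative ring A, and let B = A/I for a G-stable ideal I of A. Then the natural ring homomorphism A^G/I^G → B^G (where I^G = I ∩ A^G) is injective and integral, and the induced map Spec(B^G) → Spec(A^G/I^G) is a bijection; moreover all induced residue field extensions are purely inseparable, so the map is a universal homeomorphism. -/
open scoped TensorProduct

/-- The residue field of a commutative ring at a prime ideal. -/
noncomputable def residueAt (R : Type*) [CommRing R] (p : Ideal R) [p.IsPrime] : Type _ :=
  IsLocalRing.ResidueField (Localization.AtPrime p)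

noncomputable instance (R : Type*) [CommRing R] (p : Ideal R) [p.IsPrime] :
    Field (residueAt R p) :=
  inferInstanceAs (Field (IsLocalRing.ResidueField (Localization.AtPrime p)))

/-- The induced map of residue fields associated to a ring homomorphism and a prime of the
target. -/
noncomputable def residueMap {R S : Type*} [CommRing R] [CommRing S] (f : R →+* S)
    (Q : Ideal S) [Q.IsPrime] :
    (haveI : (Q.comap f).IsPrime := Ideal.IsPrime.comap f
     residueAt R (Q.comap f)) →+* residueAt S Q :=
  haveI : (Q.comap f).IsPrime := Ideal.IsPrime.comap f
  haveI := Localization.isLocalHom_localRingHom (Q.comap f) Q f rfl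
  IsLocalRing.ResidueField.map (Localization.localRingHom (Q.comap f) Q f rfl)

/-!
Lift `b ∈ B^G` to `a ∈ A`. The monic polynomial `∏ (X - g • a)` over the orbit of `a` has
`G`-invariant coefficients and maps to `(X - b)^n` in `B[X]`, so every `s : B^G` is the only root
of a monic polynomial over `A^G/I^G` whose image is `(X - s)^n`. This gives integrality, and since
`(X - x)^n = (X - y)^n` forces `x = y` in a domain, two homomorphisms from `B^G` to a field that
agree on `A^G/I^G` coincide. The same holds after any base change `B^G ⊗ C`, which is generated by
`C` and the `s ⊗ 1`; amalgamating residue fields turns it into injectivity on spectra, while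
integrality gives closedness and lying over. Finally the minimal polynomial over the smaller residue
field of the image of `s` divides `(X - s)^n`, so it has separable degree one.
-/

open Polynomial

universe u v

theorem Polynomial.eq_of_X_sub_C_pow_eq {R : Type*} [CommRing R] [IsDomain R] {a b : R} {n : ℕ}
    (hn : n ≠ 0) (h : (X - C a) ^ n = (X - C b) ^ n) : a = b := by
  have h₀ := congrArg (eval a) h
  simp only [eval_pow, eval_sub, eval_X, eval_C, sub_self, zero_pow hn] at h₀
  exact sub_eq_zero.1 (pow_eq_zero_iff hn |>.1 h₀.symm)

theorem RingHom.isIntegralElem_of_monic_map_eq_X_sub_C_pow {R S : Type*} [CommRing R]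
    [CommRing S] (f : R →+* S) {s : S} {n : ℕ} (hn : n ≠ 0) {p : R[X]} (hp : p.Monic)
    (h : p.map f = (X - C s) ^ n) : f.IsIntegralElem s :=
  ⟨p, hp, by rw [eval₂_eq_eval_map, h]; simp [hn]⟩

theorem RingHom.ext_of_X_sub_C_pow_mem_lifts {R S L : Type*} [CommRing R] [CommRing S]
    [CommRing L] [IsDomain L] {f : R →+* S} (hf : ∀ s : S, ∃ n ≠ 0, (X - C s) ^ n ∈ lifts f)
    {u₁ u₂ : S →+* L} (h : u₁.comp f = u₂.comp f) : u₁ = u₂ := by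
  ext s
  obtain ⟨n, hn, p, hp⟩ := hf s
  rw [coe_mapRingHom] at hp
  refine eq_of_X_sub_C_pow_eq hn ?_
  have hmap (u : S →+* L) : p.map (u.comp f) = (X - C (u s)) ^ n := by
    rw [← Polynomial.map_map, hp]; simp
  rw [← hmap, ← hmap, h]

theorem mem_perfectClosure_of_map_eq_X_sub_C_pow {F E : Type*} [Field F] [Field E] [Algebra F E]
    {x : E} {n : ℕ} (hn : n ≠ 0) {p : F[X]} (hp : p.map (algebraMap F E) = (X - C x) ^ n) :
    x ∈ perfectClosure F E := by
  have hp₀ : p ≠ 0 := by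
    rintro rfl
    exact pow_ne_zero n (X_sub_C_ne_zero x) (by simpa using hp.symm)
  have hroot : aeval x p = 0 := by
    rw [aeval_def, eval₂_eq_eval_map, hp]; simp [hn]
  rw [mem_perfectClosure_iff_natSepDegree_eq_one]
  refine le_antisymm ?_ ?_
  · calc (minpoly F x).natSepDegree ≤ p.natSepDegree :=
          natSepDegree_le_of_dvd _ _ (minpoly.dvd F x hroot) hp₀
      _ = ((X - C x) ^ n).natSepDegree := by rw [← hp, natSepDegree_map]
      _ = 1 := by simp [hn]
  · rw [Nat.one_le_iff_ne_zero, natSepDegree_ne_zero_iff, ← Nat.pos_iff_ne_zero]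
    exact minpoly.natDegree_pos (IsAlgebraic.isIntegral ⟨p, hp₀, hroot⟩)

theorem Ideal.isPurelyInseparable_residueField_map {R S : Type*} [CommRing R] [CommRing S]
    (f : R →+* S) (hf : ∀ s : S, ∃ n ≠ 0, (X - C s) ^ n ∈ lifts f) (Q : Ideal S) [Q.IsPrime] :
    letI := (ResidueField.map (Q.comap f) Q f rfl).toAlgebra
    IsPurelyInseparable (Q.comap f).ResidueField Q.ResidueField := by
  let _ := (ResidueField.map (Q.comap f) Q f rfl).toAlgebra
  have hgen (s : S) : algebraMap S Q.ResidueField s ∈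
      perfectClosure (Q.comap f).ResidueField Q.ResidueField := by
    obtain ⟨n, hn, p, hp⟩ := hf s
    rw [coe_mapRingHom] at hp
    refine mem_perfectClosure_of_map_eq_X_sub_C_pow hn
      (p := p.map (algebraMap R (Q.comap f).ResidueField)) ?_
    have hsq : (algebraMap (Q.comap f).ResidueField Q.ResidueField).comp
        (algebraMap R (Q.comap f).ResidueField) = (algebraMap S Q.ResidueField).comp f :=
      RingHom.ext (ResidueField.map_algebraMap _ _ f rfl)
    rw [Polynomial.map_map, hsq, ← Polynomial.map_map, hp]
    simp
  rw [isPurelyInseparable_iff_perfectClosure_eq_top, eq_top_iff]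
  intro z _
  obtain ⟨a, b, -, rfl⟩ := IsFractionRing.div_surjective (S ⧸ Q) z
  obtain ⟨a, rfl⟩ := Ideal.Quotient.mk_surjective a
  obtain ⟨b, rfl⟩ := Ideal.Quotient.mk_surjective b
  rw [algebraMap_quotient_residueField_mk, algebraMap_quotient_residueField_mk]
  exact div_mem (hgen a) (hgen b)

theorem RingHom.exists_field_comp_eq_of_ker_eq {R : Type*} {K₁ : Type u} {K₂ : Type v}
    [CommRing R] [Field K₁] [Field K₂] (f₁ : R →+* K₁) (f₂ : R →+* K₂) (h : ker f₁ = ker f₂) :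
    ∃ (L : Type max u v) (_ : Field L) (i₁ : K₁ →+* L) (i₂ : K₂ →+* L),
      i₁.comp f₁ = i₂.comp f₂ := by
  let D := R ⧸ ker f₁
  have hf₂ : ∀ r ∈ ker f₁, f₂ r = 0 := fun r hr ↦ by rwa [h] at hr
  let _ : Algebra D K₁ := (kerLift f₁).toAlgebra
  let _ : Algebra D K₂ := (Ideal.Quotient.lift _ f₂ hf₂).toAlgebra
  have : Nontrivial (K₁ ⊗[D] K₂) :=
    Algebra.TensorProduct.nontrivial_of_algebraMap_injective_of_isDomain D K₁ K₂
      (kerLift_injective f₁) (lift_injective_of_ker_le_ideal _ hf₂ h.ge)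
  obtain ⟨M, hM⟩ := Ideal.exists_maximal (K₁ ⊗[D] K₂)
  refine ⟨_ ⧸ M, Ideal.Quotient.field M,
    (Ideal.Quotient.mk M).comp Algebra.TensorProduct.includeLeftRingHom,
    (Ideal.Quotient.mk M).comp Algebra.TensorProduct.includeRight.toRingHom, ?_⟩
  ext r
  exact congrArg (Ideal.Quotient.mk M) <| RingHom.congr_fun
    (Algebra.TensorProduct.includeLeftRingHom_comp_algebraMap (R := D) (A := K₁) (B := K₂))
    (Ideal.Quotient.mk _ r)

theorem PrimeSpectrum.comap_injective_of_ringHom_ext {R : Type*} {S : Type u} [CommRing R]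
    [CommRing S] (f : R →+* S)
    (hf : ∀ (L : Type u) [Field L] (u₁ u₂ : S →+* L), u₁.comp f = u₂.comp f → u₁ = u₂) :
    Function.Injective (comap f) := by
  intro P₁ P₂ hP
  let κ₁ := algebraMap S P₁.asIdeal.ResidueField
  let κ₂ := algebraMap S P₂.asIdeal.ResidueField
  have hker : RingHom.ker (κ₁.comp f) = RingHom.ker (κ₂.comp f) := by
    simpa [κ₁, κ₂, ← RingHom.comap_ker] using congrArg asIdeal hP
  obtain ⟨L, _, i₁, i₂, hi⟩ := RingHom.exists_field_comp_eq_of_ker_eq _ _ hker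
  have hu := hf L (i₁.comp κ₁) (i₂.comp κ₂) (by simpa only [RingHom.comp_assoc] using hi)
  ext1
  simpa [κ₁, κ₂, RingHom.ker_comp_of_injective _ i₁.injective,
    RingHom.ker_comp_of_injective _ i₂.injective] using congrArg RingHom.ker hu

namespace Algebra.TensorProduct

variable {R S C : Type*} [CommRing R] [CommRing S] [CommRing C] [Algebra R S] [Algebra R C]

theorem ringHom_ext_of_comp_includeRight {L : Type*} [Semiring L]
    (hS : ∀ u₁ u₂ : S →+* L, u₁.comp (algebraMap R S) = u₂.comp (algebraMap R S) → u₁ = u₂)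
    {u₁ u₂ : S ⊗[R] C →+* L}
    (h : u₁.comp (includeRight : C →ₐ[R] S ⊗[R] C).toRingHom =
      u₂.comp (includeRight : C →ₐ[R] S ⊗[R] C).toRingHom) : u₁ = u₂ := by
  have hleft : u₁.comp includeLeftRingHom = u₂.comp includeLeftRingHom := by
    refine hS _ _ ?_
    simp only [RingHom.comp_assoc, includeLeftRingHom_comp_algebraMap]
    rw [← RingHom.comp_assoc, h, RingHom.comp_assoc]
  refine RingHom.ext fun x ↦ ?_
  induction x using TensorProduct.induction_on with
  | zero => simp
  | tmul s c =>
    rw [← mul_one s, ← one_mul c, ← tmul_mul_tmul, map_mul, map_mul]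
    exact congr($(RingHom.congr_fun hleft s) * $(RingHom.congr_fun h c))
  | add x y hx hy => rw [map_add, map_add, hx, hy]

theorem isIntegral_includeRight [Algebra.IsIntegral R S] :
    (includeRight : C →ₐ[R] S ⊗[R] C).toRingHom.IsIntegral := by
  have h : (includeRight : C →ₐ[R] S ⊗[R] C).toRingHom =
      (TensorProduct.comm R C S).toRingHom.comp (algebraMap C (C ⊗[R] S)) := by
    ext c; simp
  rw [h]
  exact RingHom.IsIntegral.trans _ _ (algebraMap_isIntegral_iff.2 inferInstance)
    (RingHom.isIntegral_of_surjective _ (TensorProduct.comm R C S).surjective)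

theorem comap_includeRight_surjective
    (h : Function.Surjective (PrimeSpectrum.comap (algebraMap R S))) :
    Function.Surjective
      (PrimeSpectrum.comap (includeRight : C →ₐ[R] S ⊗[R] C).toRingHom) := by
  intro q
  obtain ⟨P, hP⟩ := h (PrimeSpectrum.comap (algebraMap R C) q)
  have hker : RingHom.ker (algebraMap R P.asIdeal.ResidueField) =
      RingHom.ker (algebraMap R q.asIdeal.ResidueField) := by
    simpa [IsScalarTower.algebraMap_eq R S P.asIdeal.ResidueField,
      IsScalarTower.algebraMap_eq R C q.asIdeal.ResidueField, ← RingHom.comap_ker]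
      using congrArg PrimeSpectrum.asIdeal hP
  obtain ⟨L, _, i₁, i₂, hi⟩ := RingHom.exists_field_comp_eq_of_ker_eq _ _ hker
  let _ : Algebra R L := (i₂.comp (algebraMap R q.asIdeal.ResidueField)).toAlgebra
  let v₁ : S →ₐ[R] L := ⟨i₁.comp (algebraMap S _), fun r ↦
    (congrArg i₁ (IsScalarTower.algebraMap_apply R S _ r).symm).trans (RingHom.congr_fun hi r)⟩
  let v₂ : C →ₐ[R] L := ⟨i₂.comp (algebraMap C _), fun r ↦
    congrArg i₂ (IsScalarTower.algebraMap_apply R C _ r).symm⟩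
  let w := (productMap v₁ v₂).toRingHom
  refine ⟨⟨RingHom.ker w, RingHom.ker_isPrime w⟩, PrimeSpectrum.ext ?_⟩
  ext c
  simp [w, v₂]

theorem isHomeomorph_comap_includeRight {R : Type*} {S : Type u} {C : Type v} [CommRing R]
    [CommRing S] [CommRing C] [Algebra R S] [Algebra R C] [Algebra.IsIntegral R S]
    (hsurj : Function.Surjective (PrimeSpectrum.comap (algebraMap R S)))
    (hext : ∀ (L : Type max u v) [Field L] (u₁ u₂ : S →+* L),
      u₁.comp (algebraMap R S) = u₂.comp (algebraMap R S) → u₁ = u₂) :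
    IsHomeomorph (PrimeSpectrum.comap (includeRight : C →ₐ[R] S ⊗[R] C).toRingHom) :=
  isHomeomorph_iff_continuous_isClosedMap_bijective.2
    ⟨PrimeSpectrum.continuous_comap _,
      PrimeSpectrum.isClosedMap_comap_of_isIntegral _ isIntegral_includeRight,
      PrimeSpectrum.comap_injective_of_ringHom_ext _ fun L _ _ _ ↦
        ringHom_ext_of_comp_includeRight (hext L),
      comap_includeRight_surjective hsurj⟩

end Algebra.TensorProduct

section FixedSubring

variable {G A : Type*} [Group G] [CommRing A] [MulSemiringAction G A]

variable {I : Ideal A} [MulSemiringAction G (A ⧸ I)]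
  {φ : (fixedSubring G A ⧸ I.comap (fixedSubring G A).subtype) →+* fixedSubring G (A ⧸ I)}

theorem injective_of_coe_apply_mk_eq
    (hφ : ∀ a : fixedSubring G A,
      (φ (Ideal.Quotient.mk (I.comap (fixedSubring G A).subtype) a) : A ⧸ I) =
        Ideal.Quotient.mk I (a : A)) :
    Function.Injective φ := by
  rw [injective_iff_map_eq_zero]
  intro x hx
  obtain ⟨a, rfl⟩ := Ideal.Quotient.mk_surjective x
  rw [Ideal.Quotient.eq_zero_iff_mem, Ideal.mem_comap, ← Ideal.Quotient.eq_zero_iff_mem]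
  simpa [hx] using (hφ a).symm

variable [Fintype G]

theorem prodXSubSMul_map_eq_X_sub_C_pow {T : Type*} [CommRing T] (ψ : A →+* T) {a : A}
    (h : ∀ g : G, ψ (g • a) = ψ a) :
    ∃ n ≠ 0, (prodXSubSMul G A a).map ψ = (X - C (ψ a)) ^ n := by
  classical
  have hfactor (g : G ⧸ MulAction.stabilizer G a) :
      (X - C (MulAction.ofQuotientStabilizer G a g)).map ψ = X - C (ψ a) := by
    induction g using QuotientGroup.induction_on with
    | H g => simp [h]
  rw [prodXSubSMul, Polynomial.map_prod, Finset.prod_congr rfl fun g _ ↦ hfactor g,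
    Finset.prod_const]
  exact ⟨_, Finset.card_ne_zero.2 Finset.univ_nonempty, rfl⟩

variable (G) in
theorem exists_monic_map_subtype_eq_prodXSubSMul (a : A) :
    ∃ P : (fixedSubring G A)[X], P.Monic ∧ P.map (fixedSubring G A).subtype = prodXSubSMul G A a :=
  ⟨(prodXSubSMul G A a).toSubring _ fun _ hc g ↦ by
      obtain ⟨n, -, rfl⟩ := mem_coeffs_iff.1 hc
      exact prodXSubSMul.coeff G A a g n,
    (monic_toSubring _ _ _).2 (prodXSubSMul.monic G A a), map_toSubring _ _ _⟩

theorem exists_monic_map_eq_X_sub_C_pow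
    (hact : ∀ (g : G) (a : A), g • Ideal.Quotient.mk I a = Ideal.Quotient.mk I (g • a))
    (hφ : ∀ a : fixedSubring G A,
      (φ (Ideal.Quotient.mk (I.comap (fixedSubring G A).subtype) a) : A ⧸ I) =
        Ideal.Quotient.mk I (a : A))
    (b : fixedSubring G (A ⧸ I)) :
    ∃ n ≠ 0, ∃ P : (fixedSubring G A ⧸ I.comap (fixedSubring G A).subtype)[X],
      P.Monic ∧ P.map φ = (X - C b) ^ n := by
  obtain ⟨a, ha⟩ := Ideal.Quotient.mk_surjective (b : A ⧸ I)
  have hinv (g : G) : Ideal.Quotient.mk I (g • a) = Ideal.Quotient.mk I a := by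
    rw [← hact, ha, b.2 g]
  obtain ⟨n, hn, hmap⟩ := prodXSubSMul_map_eq_X_sub_C_pow (Ideal.Quotient.mk I) hinv
  obtain ⟨P, hPm, hP⟩ := exists_monic_map_subtype_eq_prodXSubSMul G a
  refine ⟨n, hn, P.map (Ideal.Quotient.mk _), hPm.map _,
    map_injective (fixedSubring G (A ⧸ I)).subtype Subtype.val_injective ?_⟩
  have hsq : ((fixedSubring G (A ⧸ I)).subtype.comp φ).comp (Ideal.Quotient.mk _) =
      (Ideal.Quotient.mk I).comp (fixedSubring G A).subtype :=
    RingHom.ext hφ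
  rw [Polynomial.map_map, Polynomial.map_map, hsq, ← Polynomial.map_map, hP, hmap, ha]
  simp

end FixedSubring

/-- Let a finite group `G` act on a commutative ring `A` and let `B = A/I`
for a `G`-stable ideal `I` (the `G`-action on `A/I` is given as an instance, pinned by
`hact`).  Then the natural ring homomorphism `φ : A^G/I^G → B^G` is injective and integral,
the induced map `Spec (B^G) → Spec (A^G/I^G)` is bijective, all induced residue field
extensions are purely inseparable, and `φ` is a universal homeomorphism (i.e. every base
change of `φ` induces a homeomorphism on prime spectra). -/
theorem fixed_quotient_universal_homeomorphism (G A : Type*) [Group G] [Finite G] [CommRing A]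
    [MulSemiringAction G A] (I : Ideal A) [MulSemiringAction G (A ⧸ I)]
    (hact : ∀ (g : G) (a : A),
      g • (Ideal.Quotient.mk I a) = Ideal.Quotient.mk I (g • a))
    (φ : ((fixedSubring G A) ⧸ (I.comap (fixedSubring G A).subtype)) →+*
          fixedSubring G (A ⧸ I))
    (hφ : ∀ a : fixedSubring G A,
      (φ (Ideal.Quotient.mk (I.comap (fixedSubring G A).subtype) a) : A ⧸ I) =
        Ideal.Quotient.mk I (a : A)) :
    Function.Injective φ ∧
      φ.IsIntegral ∧
      Function.Bijective (PrimeSpectrum.comap φ) ∧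
      (∀ (Q : Ideal (fixedSubring G (A ⧸ I))) (hQ : Q.IsPrime),
        letI := hQ
        letI : Algebra (residueAt _ (Q.comap φ)) (residueAt _ Q) := (residueMap φ Q).toAlgebra
        IsPurelyInseparable (residueAt _ (Q.comap φ)) (residueAt _ Q)) ∧
      (∀ (C : Type*) [CommRing C]
        (g : ((fixedSubring G A) ⧸ (I.comap (fixedSubring G A).subtype)) →+* C),
        letI : Algebra ((fixedSubring G A) ⧸ (I.comap (fixedSubring G A).subtype)) C :=
          g.toAlgebra
        letI : Algebra ((fixedSubring G A) ⧸ (I.comap (fixedSubring G A).subtype))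
            (fixedSubring G (A ⧸ I)) := φ.toAlgebra
        IsHomeomorph (PrimeSpectrum.comap
          (Algebra.TensorProduct.includeRight
            (R := (fixedSubring G A) ⧸ (I.comap (fixedSubring G A).subtype))
            (A := fixedSubring G (A ⧸ I)) (B := C)).toRingHom)) := by
  have := Fintype.ofFinite G
  have hkey := exists_monic_map_eq_X_sub_C_pow hact hφ
  have hinj : Function.Injective φ := injective_of_coe_apply_mk_eq hφ
  have hint : φ.IsIntegral := fun b ↦
    have ⟨n, hn, P, hPm, hP⟩ := hkey b
    φ.isIntegralElem_of_monic_map_eq_X_sub_C_pow hn hPm hP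
  have hlifts (b : fixedSubring G (A ⧸ I)) : ∃ n ≠ 0, (X - C b) ^ n ∈ lifts φ :=
    have ⟨n, hn, P, _, hP⟩ := hkey b
    ⟨n, hn, P, hP⟩
  refine ⟨hinj, hint, ⟨PrimeSpectrum.comap_injective_of_ringHom_ext φ
    fun _ _ _ _ ↦ RingHom.ext_of_X_sub_C_pow_mem_lifts hlifts, hint.comap_surjective hinj⟩,
    fun Q _ ↦ Ideal.isPurelyInseparable_residueField_map φ hlifts Q, fun C _ g ↦ ?_⟩
  let _ := g.toAlgebra
  let _ := φ.toAlgebra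
  have : Algebra.IsIntegral _ (fixedSubring G (A ⧸ I)) := ⟨hint⟩
  exact Algebra.TensorProduct.isHomeomorph_comap_includeRight (hint.comap_surjective hinj)
    fun _ _ _ _ ↦ RingHom.ext_of_X_sub_C_pow_mem_lifts hlifts
end

section
/- Let G be a finite group acting on a commutative ring A, and let B be a localisation of A such that the localisation map A → B is G-equivariant. If S ⊆ A is the set of elements of A that become invertible in B and S^G = S ∩ A^G, then B^G = (S^G)^{-1} A^G and B ≅ A ⊗_{A^G} B^G. -/
open scoped TensorProduct

/-!
Every `u ∈ A` that becomes a unit in `B` divides its norm `∏ g, g • u`, which is invariant and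
again becomes a unit; so `B` is already the localisation of `A` at `S^G`. If `x / s` is an
invariant fraction with `s ∈ S^G`, then `f (g • x) = f x` for all `g`, so `c_g (g • x) = c_g x`
for some `c_g ∈ S^G`, and multiplying numerator and denominator by `∏ g, c_g` turns it into a
fraction of invariants. Hence `B^G = (S^G)⁻¹ A^G`, and `B = (S^G)⁻¹ A` is the base change
`A ⊗_{A^G} (S^G)⁻¹ A^G`.
-/

section FixedSubring

variable {G : Type*} [Group G]

theorem prod_smul_mem_fixedSubring {A : Type*} [Fintype G] [CommRing A] [MulSemiringAction G A]
    (a : A) : ∏ g : G, g • a ∈ fixedSubring G A :=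
  Finset.smul_prod_perm a

theorem dvd_prod_smul {A : Type*} [Fintype G] [CommMonoid A] [MulAction G A] (a : A) :
    a ∣ ∏ g : G, g • a := by
  simpa using Finset.dvd_prod_of_mem (fun g : G => g • a) (Finset.mem_univ 1)

theorem isUnit_of_isUnit_val_fixedSubring {B : Type*} [CommRing B] [MulSemiringAction G B]
    {x : fixedSubring G B} (hx : IsUnit (x : B)) : IsUnit x := by
  obtain ⟨u, hu⟩ := hx
  refine isUnit_iff_exists_inv.mpr ⟨⟨↑u⁻¹, fun g => u.isUnit.mul_left_cancel ?_⟩,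
    Subtype.ext (by simp [← hu])⟩
  calc (u : B) * g • ↑u⁻¹ = g • ((u : B) * ↑u⁻¹) := by rw [smul_mul', hu, x.2 g]
    _ = u * ↑u⁻¹ := by rw [Units.mul_inv, smul_one]

end FixedSubring

section EquivariantLocalization

variable {G A B : Type*} [Group G] [Finite G] [CommRing A] [CommRing B] [MulSemiringAction G A]
  [Algebra A B] (S : Submonoid (fixedSubring G A))

theorem isLocalization_algebraMapSubmonoid_of_equivariant [MulSemiringAction G B]
    (hf : ∀ (g : G) (a : A), algebraMap A B (g • a) = g • algebraMap A B a)
    (hS : ∀ a : fixedSubring G A, a ∈ S ↔ IsUnit (algebraMap A B a))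
    (M : Submonoid A) [IsLocalization M B] :
    IsLocalization (Algebra.algebraMapSubmonoid A S) B := by
  have := Fintype.ofFinite G
  let U := (IsUnit.submonoid B).comap (algebraMap A B)
  have : IsLocalization U B :=
    IsLocalization.of_le M U (fun m hm => IsLocalization.map_units B ⟨m, hm⟩) fun _ hu => hu
  refine (IsLocalization.iff_of_le_of_exists_dvd _ U ?_ ?_).mpr this
  · rintro _ ⟨s, hs, rfl⟩
    exact (hS s).mp hs
  · intro u hu
    refine ⟨_, ⟨⟨_, prod_smul_mem_fixedSubring u⟩, (hS _).mpr ?_, rfl⟩, dvd_prod_smul u⟩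
    rw [map_prod]
    exact IsUnit.prod_univ_iff.mpr fun g => by
      rw [hf]
      exact hu.map (MulSemiringAction.toRingHom G B g)

theorem exists_mem_mul_mem_fixedSubring [IsLocalization (Algebra.algebraMapSubmonoid A S) B]
    {x : A} (hx : ∀ g : G, algebraMap A B (g • x) = algebraMap A B x) :
    ∃ s ∈ S, (s : A) * x ∈ fixedSubring G A := by
  have := Fintype.ofFinite G
  choose t ht using fun g =>
    IsLocalization.exists_of_eq (M := Algebra.algebraMapSubmonoid A S) (hx g)
  obtain ⟨s, hs, hst⟩ : ∏ g, (t g : A) ∈ Algebra.algebraMapSubmonoid A S :=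
    prod_mem fun g _ => (t g).2
  refine ⟨s, hs, fun g => ?_⟩
  obtain ⟨r, hr⟩ := Finset.dvd_prod_of_mem (fun g => (t g : A)) (Finset.mem_univ g)
  rw [smul_mul', s.2 g, show (s : A) = _ from hst, hr, mul_right_comm, ht g, mul_right_comm]

theorem isLocalization_fixedSubring_of_equivariant [MulSemiringAction G B]
    (hf : ∀ (g : G) (a : A), algebraMap A B (g • a) = g • algebraMap A B a)
    (hS : ∀ a : fixedSubring G A, a ∈ S ↔ IsUnit (algebraMap A B a))
    [IsLocalization (Algebra.algebraMapSubmonoid A S) B]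
    [Algebra (fixedSubring G A) (fixedSubring G B)]
    (halg : ∀ a, (algebraMap (fixedSubring G A) (fixedSubring G B) a : B) = algebraMap A B a) :
    IsLocalization S (fixedSubring G B) where
  map_units s := isUnit_of_isUnit_val_fixedSubring (by rw [halg]; exact (hS s).mp s.2)
  surj z := by
    obtain ⟨⟨x, t⟩, hxt⟩ := IsLocalization.surj (Algebra.algebraMapSubmonoid A S) (z : B)
    obtain ⟨s, hs, hst⟩ := t.2
    replace hxt : z * algebraMap A B s = algebraMap A B x := by rw [← hxt, ← hst]; rfl
    have hx : ∀ g : G, algebraMap A B (g • x) = algebraMap A B x := fun g => by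
      rw [hf, ← hxt, smul_mul', z.2 g, ← hf, s.2 g]
    obtain ⟨c, hc, hcx⟩ := exists_mem_mul_mem_fixedSubring S hx
    refine ⟨(⟨_, hcx⟩, ⟨c * s, mul_mem hc hs⟩), Subtype.ext ?_⟩
    simp only [Subring.coe_mul, halg, map_mul]
    rw [← hxt]
    ring
  exists_of_eq {x y} h := by
    obtain ⟨⟨_, s, hs, rfl⟩, hc⟩ :=
      IsLocalization.exists_of_eq (M := Algebra.algebraMapSubmonoid A S) (S := B)
        (by rw [← halg, ← halg, h] : algebraMap A B x = algebraMap A B y)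
    exact ⟨⟨s, hs⟩, Subtype.ext hc⟩

end EquivariantLocalization

/-- Let `G` be a finite group acting on commutative rings `A` and `B` and let
`f : A → B` be a `G`-equivariant localisation of `A`.  Let `S ⊆ A` be the set of elements that
become invertible in `B` and `S^G = S ∩ A^G`.  Then `B^G = (S^G)⁻¹ A^G` and
`B ≅ A ⊗_{A^G} B^G`. -/
theorem fixed_of_equivariant_localization (G A B : Type*) [Group G] [Finite G] [CommRing A]
    [CommRing B] [MulSemiringAction G A] [MulSemiringAction G B]
    (f : A →+* B) (hf : ∀ (g : G) (a : A), f (g • a) = g • f a)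
    (M : Submonoid A) (hloc : @IsLocalization A _ M B _ f.toAlgebra)
    (S' : Submonoid (fixedSubring G A)) (hS' : ∀ a : fixedSubring G A, a ∈ S' ↔ IsUnit (f a))
    (f' : fixedSubring G A →+* fixedSubring G B)
    (hf' : ∀ a : fixedSubring G A, (f' a : B) = f a) :
    (@IsLocalization (fixedSubring G A) _ S' (fixedSubring G B) _ f'.toAlgebra) ∧
      (letI : Algebra (fixedSubring G A) (fixedSubring G B) := f'.toAlgebra
        ∃ e : (TensorProduct (fixedSubring G A) A (fixedSubring G B)) ≃+* B,
          (∀ a : A, e (a ⊗ₜ 1) = f a) ∧ (∀ b : fixedSubring G B, e (1 ⊗ₜ b) = (b : B))) := by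
  let : Algebra A B := f.toAlgebra
  let : Algebra (fixedSubring G A) (fixedSubring G B) := f'.toAlgebra
  let : Algebra (fixedSubring G A) B := (f.comp (fixedSubring G A).subtype).toAlgebra
  have : IsScalarTower (fixedSubring G A) A B := .of_algebraMap_eq fun _ => rfl
  have : IsScalarTower (fixedSubring G A) (fixedSubring G B) B :=
    .of_algebraMap_eq fun a => (hf' a).symm
  have := isLocalization_algebraMapSubmonoid_of_equivariant S' hf hS' M
  have hB := isLocalization_fixedSubring_of_equivariant S' hf hS' hf'
  have := Algebra.isPushout_of_isLocalization S' (fixedSubring G B) A B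
  refine ⟨hB, (Algebra.IsPushout.equiv _ A _ B).toRingEquiv, fun a => ?_, fun b => ?_⟩ <;>
    simp [Algebra.IsPushout.equiv_tmul] <;> rfl
end

section
/- Let A be a commutative ring with an action of a finite group G, let q ∈ Spec(A^G), and let A(q) = (A ⊗_{A^G} k(q))_red be the reduced fiber. Then A(q) is isomorphic as a ring to the finite product k(p_1) × … × k(p_r) of the residue fields of A at the prime ideals p_1,…,p_r of A lying over q. -/
open scoped TensorProduct
set_option synthInstance.maxHeartbeats 400000
set_option maxHeartbeats 1000000

/-!
`A` is integral over `A^G` and `G` permutes the primes over `q` transitively, so there are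
finitely many of them. The fiber `k(q) ⊗ A` is then integral over a field, hence
zero-dimensional, and its primes correspond to the primes `p` of `A` over `q`; by the Chinese
remainder theorem its reduced quotient is the product of its residue fields. The residue field
at the prime over `p` is `Frac(A/p)`, because every element of the fiber becomes of the form
`1 ⊗ s` after multiplication by some `r ∉ q`.
-/

theorem Algebra.IsInvariant.finite_primesOver {A B : Type*} [CommRing A] [CommRing B]
    [Algebra A B] (G : Type*) [Group G] [Finite G] [MulSemiringAction G B]
    [SMulCommClass G A B] [Algebra.IsInvariant A B G] (P : Ideal A) :
    (P.primesOver B).Finite := by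
  obtain h | ⟨Q, hQ, hQP⟩ := (P.primesOver B).eq_empty_or_nonempty
  · exact h ▸ Set.finite_empty
  · exact orbit_eq_primesOver A B G P Q ▸ Set.finite_range _

section fixedSubring

variable (G A : Type*) [Group G] [CommRing A] [MulSemiringAction G A]

instance : SMulCommClass G (fixedSubring G A) A where
  smul_comm g r a := by
    rw [Subring.smul_def, smul_eq_mul, smul_mul', r.2 g]
    rfl

instance : Algebra.IsInvariant (fixedSubring G A) A G :=
  ⟨fun a ha ↦ ⟨⟨a, ha⟩, rfl⟩⟩

end fixedSubring

noncomputable def quotNilradicalEquivPiOfKrullDimLEZero (T : Type*) [CommRing T]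
    [Ring.KrullDimLE 0 T] [Finite (PrimeSpectrum T)] :
    T ⧸ nilradical T ≃+* ∀ Q : PrimeSpectrum T, T ⧸ Q.asIdeal :=
  (Ideal.quotEquivOfEq PrimeSpectrum.nilradical_eq_iInf).trans <|
    Ideal.quotientInfRingEquivPiQuotient _ fun _ _ hne ↦
      Ideal.isCoprime_of_isMaximal (mt PrimeSpectrum.ext hne)

theorem RingEquiv.map_nilradical {A B : Type*} [CommRing A] [CommRing B] (e : A ≃+* B) :
    (nilradical A).map (e : A →+* B) = nilradical B := by
  ext x
  rw [Ideal.map_comap_of_equiv, Ideal.mem_comap, mem_nilradical, mem_nilradical,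
    IsNilpotent.map_iff e.symm.injective]

def RingEquiv.quotNilradicalCongr {A B : Type*} [CommRing A] [CommRing B] (e : A ≃+* B) :
    A ⧸ nilradical A ≃+* B ⧸ nilradical B :=
  Ideal.quotientEquiv _ _ e e.map_nilradical.symm

namespace Ideal

namespace Fiber

open Algebra.TensorProduct

variable {R S : Type*} [CommRing R] [CommRing S] [Algebra R S] (p : Ideal R) [p.IsPrime]

instance [Algebra.IsIntegral R S] : Ring.KrullDimLE 0 (p.Fiber S) :=
  .mk₀ fun Q _ ↦ isMaximal_of_isIntegral_of_isMaximal_comap (R := p.ResidueField) Q inferInstance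

instance [Finite (p.primesOver S)] : Finite (PrimeSpectrum (p.Fiber S)) :=
  .of_equiv _ (PrimeSpectrum.primesOverOrderIsoFiber R S p).toEquiv

variable {p} (Q : Ideal (p.Fiber S))

-- The codomain is given explicitly: unification cannot recover its commutative semiring
-- structure from the `Semiring` the ideal quotient carries.
noncomputable instance : Algebra (S ⧸ Q.comap includeRight) (p.Fiber S ⧸ Q) :=
  @RingHom.toAlgebra _ (p.Fiber S ⧸ Q) _ _ (quotientMap Q includeRight.toRingHom le_rfl)

variable [Q.IsMaximal]

noncomputable instance : Field (p.Fiber S ⧸ Q) := Quotient.field Q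

instance : IsFractionRing (S ⧸ Q.comap includeRight) (p.Fiber S ⧸ Q) := by
  have : FaithfulSMul (S ⧸ Q.comap includeRight) (p.Fiber S ⧸ Q) :=
    (faithfulSMul_iff_algebraMap_injective _ _).mpr quotientMap_injective
  refine IsFractionRing.of_field _ _ fun z ↦ ?_
  obtain ⟨x, rfl⟩ := Quotient.mk_surjective z
  obtain ⟨r, hr, s, hrx⟩ := exists_smul_eq_one_tmul p x
  have hrQ : algebraMap R (p.Fiber S) r ∉ Q := by
    rwa [← mem_comap, ← under_def, ← over_def Q p]
  have hr_image : algebraMap (S ⧸ Q.comap includeRight) (p.Fiber S ⧸ Q)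
      (Quotient.mk _ (algebraMap R S r)) = Quotient.mk Q (algebraMap R (p.Fiber S) r) :=
    congrArg (Quotient.mk Q) (includeRight.commutes r)
  refine ⟨Quotient.mk _ s, Quotient.mk _ (algebraMap R S r), ?_⟩
  rw [hr_image, eq_div_iff (Quotient.eq_zero_iff_mem.not.mpr hrQ), ← map_mul, mul_comm,
    ← Algebra.smul_def, hrx]
  rfl

variable (p S) in
noncomputable def quotNilradicalEquivPi [Algebra.IsIntegral R S] [Finite (p.primesOver S)] :
    p.Fiber S ⧸ nilradical (p.Fiber S) ≃+* ∀ P : p.primesOver S, FractionRing (S ⧸ P.1) :=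
  (quotNilradicalEquivPiOfKrullDimLEZero _).trans <|
    (RingEquiv.piCongrRight fun Q : PrimeSpectrum (p.Fiber S) ↦
      (FractionRing.algEquiv (S ⧸ Q.asIdeal.comap includeRight)
        (p.Fiber S ⧸ Q.asIdeal)).toRingEquiv.symm).trans <|
    RingEquiv.piCongrLeft (fun P : p.primesOver S ↦ FractionRing (S ⧸ P.1))
      (PrimeSpectrum.primesOverOrderIsoFiber R S p).symm.toEquiv

end Fiber

variable {R S : Type*} [CommRing R] [CommRing S] [Algebra R S] (p : Ideal R) [p.IsPrime]
  (K : Type*) [Field K] [Algebra (R ⧸ p) K] [IsFractionRing (R ⧸ p) K] [Algebra R K]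
  [IsScalarTower R (R ⧸ p) K]

noncomputable def tensorEquivFiber : S ⊗[R] K ≃+* p.Fiber S :=
  ((Algebra.TensorProduct.comm R S K).trans <| Algebra.TensorProduct.congr
    ((IsLocalization.algEquiv (nonZeroDivisors (R ⧸ p)) K p.ResidueField).restrictScalars R)
    AlgEquiv.refl).toRingEquiv

noncomputable def tensorQuotNilradicalEquivPi [Algebra.IsIntegral R S]
    [Finite (p.primesOver S)] :
    S ⊗[R] K ⧸ nilradical (S ⊗[R] K) ≃+* ∀ P : p.primesOver S, FractionRing (S ⧸ P.1) :=
  (tensorEquivFiber p K).quotNilradicalCongr.trans (Fiber.quotNilradicalEquivPi S p)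

end Ideal

/-- Let a finite group `G` act on a commutative ring `A`, let
`q ∈ Spec (A^G)`, let `k(q)` be the residue field of `A^G` at `q` (the fraction field of
`A^G/q`), and let `A(q) = (A ⊗_{A^G} k(q))_red` be the reduced fiber.  Then `A(q)` is
isomorphic, as a ring, to the finite product `k(p₁) × … × k(p_r)` of the residue fields of
`A` at the prime ideals `p₁, …, p_r` of `A` lying over `q`. -/
theorem reduced_fiber_iso_prod_residue_fields (G A : Type*) [Group G] [Finite G] [CommRing A]
    [MulSemiringAction G A] (q : Ideal (fixedSubring G A)) [q.IsPrime]
    (kq : Type*) [Field kq] [Algebra ((fixedSubring G A) ⧸ q) kq]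
    [IsFractionRing ((fixedSubring G A) ⧸ q) kq] :
    letI : Algebra (fixedSubring G A) kq :=
      ((algebraMap ((fixedSubring G A) ⧸ q) kq).comp (Ideal.Quotient.mk q)).toAlgebra
    ∃ (r : ℕ) (ps : Fin r → Ideal A),
      Function.Injective ps ∧
      (∀ i, (ps i).IsPrime) ∧
      (∀ i, (ps i).comap (fixedSubring G A).subtype = q) ∧
      (∀ p : Ideal A, p.IsPrime → p.comap (fixedSubring G A).subtype = q → ∃ i, p = ps i) ∧
      Nonempty
        ((TensorProduct (fixedSubring G A) A kq ⧸
            nilradical (TensorProduct (fixedSubring G A) A kq)) ≃+*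
          ∀ i, FractionRing (A ⧸ ps i)) := by
  let : Algebra (fixedSubring G A) kq :=
    ((algebraMap ((fixedSubring G A) ⧸ q) kq).comp (Ideal.Quotient.mk q)).toAlgebra
  have : IsScalarTower (fixedSubring G A) (fixedSubring G A ⧸ q) kq :=
    .of_algebraMap_eq' (R := fixedSubring G A) (S := fixedSubring G A ⧸ q) rfl
  have : Algebra.IsIntegral (fixedSubring G A) A := Algebra.IsInvariant.isIntegral _ _ G
  have : Finite (q.primesOver A) := (Algebra.IsInvariant.finite_primesOver G q).to_subtype
  obtain ⟨r, ⟨e⟩⟩ := Finite.exists_equiv_fin (q.primesOver A)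
  refine ⟨r, fun i ↦ (e.symm i).1, fun i j h ↦ e.symm.injective (Subtype.ext h),
    fun i ↦ (e.symm i).2.1, fun i ↦ (e.symm i).2.2.over.symm,
    fun P hP hPq ↦ ⟨e ⟨P, hP, ⟨hPq.symm⟩⟩, by simp⟩, ⟨?_⟩⟩
  exact (Ideal.tensorQuotNilradicalEquivPi q kq).trans (RingEquiv.piCongrLeft _ e.symm).symm
end
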